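/- arXiv:1408.5763 — 2 statements merged into one kernel-verified Lean document; each statement's English description precedes it below -/
import Mathlib

section
/- Let X be a compact metric space and f₁,…,f_k continuous self-maps of X generating a minimal IFS. Let ℙ be the Bernoulli measure on Σ = {1,…,k}^ℕ with strictly positive weights. Then for every x ∈ X and every nonempty open set U ⊆ X, ℙ-almost every ω ∈ Σ satisfies: there exists n ≥ 1 with f^n_ω(x) ∈ U, where f^n_ω = f_{ωₙ} ∘ ⋯ ∘ f_{ω₁}. -/
/-!
By minimality every point is moved into `U` by some nonempty word, and by compactness and
continuity finitely many such words suffice; they have length at most some `N` and Bernoulli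
probability at least some `δ > 0`. Whatever the first `n` letters of `ω`, the orbit enters `U`
within `N` more steps as soon as `ω` continues with the escape word of the point reached, which has
conditional probability at least `δ`. So the probability of avoiding `U` up to time `n` shrinks by
the factor `1 - δ` every `N` steps, and avoiding `U` forever is a null event.
-/

open MeasureTheory
open scoped ENNReal

/-- Apply the maps of an IFS along a finite word: `f_{w_n} ∘ ⋯ ∘ f_{w_1}`. -/
def applyWord {X : Type*} {k : ℕ} (f : Fin k → X → X) (w : List (Fin k)) (x : X) : X :=
  w.foldl (fun y i => f i y) x

/-- The fiberwise iterate `f^n_ω(x) = f_{ω_n} ∘ ⋯ ∘ f_{ω_1}(x)` (0-indexed `ω`). -/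
def fIter {X : Type*} {k : ℕ} (f : Fin k → X → X) (ω : ℕ → Fin k) (x : X) : ℕ → X
  | 0 => x
  | n + 1 => f (ω n) (fIter f ω x n)

section WordPrefix

variable {α : Type*}

def wordPrefix (n : ℕ) (ω : ℕ → α) : Fin n → α := fun i => ω i

theorem wordPrefix_preimage_singleton (n : ℕ) (w : Fin n → α) :
    wordPrefix n ⁻¹' {w} = {ω | ∀ i : Fin n, ω i = w i} :=
  Set.ext fun _ => funext_iff

theorem wordPrefix_preimage_append_subset {n m : ℕ} (w : Fin n → α) (v : Fin m → α) :
    wordPrefix (n + m) ⁻¹' {Fin.append w v} ⊆ wordPrefix n ⁻¹' {w} := by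
  intro ω hω
  funext i
  simpa [wordPrefix, Fin.append_left] using congrFun hω (Fin.castAdd m i)

end WordPrefix

section Words

variable {X : Type*} {k : ℕ} (f : Fin k → X → X)

theorem applyWord_append (u v : List (Fin k)) (x : X) :
    applyWord f (u ++ v) x = applyWord f v (applyWord f u x) :=
  List.foldl_append

theorem continuous_applyWord [TopologicalSpace X] (hf : ∀ i, Continuous (f i))
    (w : List (Fin k)) : Continuous (applyWord f w) := by
  induction w with
  | nil => exact continuous_id
  | cons a t ih => exact ih.comp (hf a)

theorem fIter_eq_applyWord (ω : ℕ → Fin k) (x : X) (n : ℕ) :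
    fIter f ω x n = applyWord f (List.ofFn (wordPrefix n ω)) x := by
  induction n with
  | zero => rfl
  | succ n ih =>
    rw [List.ofFn_succ', List.concat_eq_append, applyWord_append]
    exact congrArg (f (ω n)) ih

theorem fIter_congr {ω ω' : ℕ → Fin k} (x : X) {n : ℕ} (h : ∀ i < n, ω i = ω' i) :
    fIter f ω x n = fIter f ω' x n := by
  rw [fIter_eq_applyWord, fIter_eq_applyWord]
  congr 2
  exact funext fun i => h i i.2

theorem exists_finset_words_forall_applyWord_mem [TopologicalSpace X] [CompactSpace X]
    (hf : ∀ i, Continuous (f i)) {U : Set X} (hU : IsOpen U)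
    (hesc : ∀ z, ∃ u : List (Fin k), u ≠ [] ∧ applyWord f u z ∈ U) :
    ∃ F : Finset {u : List (Fin k) // u ≠ []}, ∀ z, ∃ u ∈ F, applyWord f u z ∈ U := by
  obtain ⟨F, hF⟩ := isCompact_univ.elim_finite_subcover
    (fun u : {u : List (Fin k) // u ≠ []} => applyWord f u ⁻¹' U)
    (fun u => hU.preimage (continuous_applyWord f hf u))
    (fun z _ => by
      obtain ⟨u, hu, hzu⟩ := hesc z
      exact Set.mem_iUnion.2 ⟨⟨u, hu⟩, hzu⟩)
  exact ⟨F, fun z => by simpa using hF (Set.mem_univ z)⟩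

end Words

section Bernoulli

variable {α : Type*} [MeasurableSpace α]

theorem measurableSet_wordPrefix_preimage_singleton [MeasurableSingletonClass α] (n : ℕ)
    (w : Fin n → α) :
    MeasurableSet (wordPrefix n ⁻¹' {w}) :=
  (measurable_pi_lambda (wordPrefix n) fun i => measurable_pi_apply (i : ℕ))
    (measurableSet_singleton w)

def IsBernoulli (μ : Measure (ℕ → α)) (p : α → ℝ≥0∞) : Prop :=
  ∀ (n : ℕ) (w : Fin n → α), μ (wordPrefix n ⁻¹' {w}) = ∏ i, p (w i)

variable {μ : Measure (ℕ → α)} {p : α → ℝ≥0∞}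

theorem IsBernoulli.isProbabilityMeasure (hμ : IsBernoulli μ p) : IsProbabilityMeasure μ := by
  have huniv : wordPrefix 0 ⁻¹' {Fin.elim0} = (Set.univ : Set (ℕ → α)) :=
    Set.eq_univ_of_forall fun ω => Subsingleton.elim (wordPrefix 0 ω) Fin.elim0
  exact ⟨by simpa [huniv] using hμ 0 Fin.elim0⟩

theorem IsBernoulli.measure_append (hμ : IsBernoulli μ p) {n m : ℕ} (w : Fin n → α)
    (v : Fin m → α) :
    μ (wordPrefix (n + m) ⁻¹' {Fin.append w v}) = μ (wordPrefix n ⁻¹' {w}) * ∏ j, p (v j) := by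
  rw [hμ, hμ, Fin.prod_univ_add]
  simp [Fin.append_left, Fin.append_right]

theorem IsBernoulli.measure_diff_append_le [MeasurableSingletonClass α] (hμ : IsBernoulli μ p)
    {n m : ℕ} (w : Fin n → α) (v : Fin m → α) {δ : ℝ≥0∞} (hδ : δ ≤ ∏ j, p (v j)) :
    μ (wordPrefix n ⁻¹' {w} \ wordPrefix (n + m) ⁻¹' {Fin.append w v})
      ≤ (1 - δ) * μ (wordPrefix n ⁻¹' {w}) := by
  have := hμ.isProbabilityMeasure
  rw [measure_sdiff (wordPrefix_preimage_append_subset w v)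
      (measurableSet_wordPrefix_preimage_singleton _ _).nullMeasurableSet (measure_ne_top μ _),
    hμ.measure_append, ENNReal.sub_mul fun _ _ => measure_ne_top μ _, one_mul, mul_comm]
  gcongr

theorem IsBernoulli.measure_le_of_forall_not_continue [MeasurableSingletonClass α]
    (hμ : IsBernoulli μ p) {n : ℕ} (T : Finset (Fin n → α)) (v : (Fin n → α) → List α) {δ : ℝ≥0∞}
    (hδ : ∀ w ∈ T, δ ≤ ∏ j, p ((v w).get j)) {S : Set (ℕ → α)}
    (hS : ∀ ω ∈ S, wordPrefix n ω ∈ T ∧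
      wordPrefix (n + (v (wordPrefix n ω)).length) ω
        ≠ Fin.append (wordPrefix n ω) (v (wordPrefix n ω)).get) :
    μ S ≤ (1 - δ) * μ (wordPrefix n ⁻¹' T) := by
  have hcover : S ⊆ ⋃ w ∈ T,
      wordPrefix n ⁻¹' {w} \ wordPrefix (n + (v w).length) ⁻¹' {Fin.append w (v w).get} :=
    fun ω hω => Set.mem_biUnion (hS ω hω).1 ⟨rfl, (hS ω hω).2⟩
  calc μ S ≤ ∑ w ∈ T, μ (wordPrefix n ⁻¹' {w} \
        wordPrefix (n + (v w).length) ⁻¹' {Fin.append w (v w).get}) :=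
        (measure_mono hcover).trans (measure_biUnion_finset_le _ _)
    _ ≤ ∑ w ∈ T, (1 - δ) * μ (wordPrefix n ⁻¹' {w}) :=
        Finset.sum_le_sum fun w hw => hμ.measure_diff_append_le w _ (hδ w hw)
    _ = (1 - δ) * μ (wordPrefix n ⁻¹' T) := by
        rw [← Finset.mul_sum, sum_measure_preimage_singleton T
          fun w _ => measurableSet_wordPrefix_preimage_singleton n w]

end Bernoulli

theorem measure_iInter_eq_zero_of_le_mul {Ω : Type*} [MeasurableSpace Ω] {μ : Measure Ω}
    [IsFiniteMeasure μ] {A : ℕ → Set Ω} {N : ℕ} {r : ℝ≥0∞} (hr : r < 1)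
    (h : ∀ n, μ (A (n + N)) ≤ r * μ (A n)) : μ (⋂ n, A n) = 0 := by
  have hpow : ∀ m, μ (A (m * N)) ≤ r ^ m * μ Set.univ := by
    intro m
    induction m with
    | zero => simpa using measure_mono (Set.subset_univ _)
    | succ m ih =>
      calc μ (A ((m + 1) * N)) = μ (A (m * N + N)) := by rw [add_mul, one_mul]
        _ ≤ r * (r ^ m * μ Set.univ) := (h _).trans (by gcongr)
        _ = r ^ (m + 1) * μ Set.univ := by rw [pow_succ', mul_assoc]
  have hlim : Filter.Tendsto (fun m => r ^ m * μ Set.univ) Filter.atTop (nhds 0) := by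
    simpa using ENNReal.Tendsto.mul_const (ENNReal.tendsto_pow_atTop_nhds_zero_of_lt_one hr)
      (Or.inr (measure_ne_top μ Set.univ))
  exact le_antisymm
    (ge_of_tendsto' hlim fun m => (measure_mono (Set.iInter_subset _ _)).trans (hpow m))
    zero_le

section Avoidance

variable {X : Type*} {k : ℕ} (f : Fin k → X → X) (x : X) (U : Set X)

def orbitAvoids (n : ℕ) : Set (ℕ → Fin k) :=
  {ω | ∀ m ∈ Finset.Icc 1 n, fIter f ω x m ∉ U}

theorem orbitAvoids_anti {n n' : ℕ} (h : n ≤ n') : orbitAvoids f x U n' ⊆ orbitAvoids f x U n :=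
  fun _ hω m hm => hω m (Finset.Icc_subset_Icc_right h hm)

theorem wordPrefix_preimage_image_orbitAvoids (n : ℕ) :
    wordPrefix n ⁻¹' (wordPrefix n '' orbitAvoids f x U n) ⊆ orbitAvoids f x U n := by
  rintro ω ⟨ω', hω', hprefix⟩ m hm
  rw [fIter_congr f x fun i hi => (congrFun hprefix ⟨i, hi.trans_le (Finset.mem_Icc.1 hm).2⟩).symm]
  exact hω' m hm

theorem IsBernoulli.measure_orbitAvoids_add_le {μ : Measure (ℕ → Fin k)} {p : Fin k → ℝ≥0∞}
    (hμ : IsBernoulli μ p) (F : Finset {u : List (Fin k) // u ≠ []})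
    (hF : ∀ z, ∃ u ∈ F, applyWord f u z ∈ U) (n : ℕ) :
    μ (orbitAvoids f x U (n + F.sup fun u => u.1.length))
      ≤ (1 - F.inf fun u => ∏ j, p (u.1.get j)) * μ (orbitAvoids f x U n) := by
  choose esc hescF hescU using hF
  set N := F.sup fun u => u.1.length
  set δ := F.inf fun u => ∏ j, p (u.1.get j)
  set T : Finset (Fin n → Fin k) := (Set.toFinite (wordPrefix n '' orbitAvoids f x U n)).toFinset
  set v : (Fin n → Fin k) → List (Fin k) := fun w => esc (applyWord f (List.ofFn w) x)
  have hδ : ∀ w ∈ T, δ ≤ ∏ j, p ((v w).get j) :=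
    fun w _ => Finset.inf_le (f := fun u => ∏ j, p (u.1.get j)) (hescF _)
  have hescape : ∀ ω ∈ orbitAvoids f x U (n + N), wordPrefix n ω ∈ T ∧
      wordPrefix (n + (v (wordPrefix n ω)).length) ω
        ≠ Fin.append (wordPrefix n ω) (v (wordPrefix n ω)).get := by
    intro ω hω
    refine ⟨by simpa [T] using ⟨ω, orbitAvoids_anti f x U (Nat.le_add_right _ _) hω, rfl⟩,
      fun hcont => ?_⟩
    set u := esc (applyWord f (List.ofFn (wordPrefix n ω)) x)
    have hlen : u.1.length ≤ N := Finset.le_sup (f := fun u => u.1.length) (hescF _)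
    have hpos : 0 < u.1.length := List.length_pos_iff.2 u.2
    refine hω (n + u.1.length) (Finset.mem_Icc.2 ⟨by omega, by omega⟩) ?_
    rw [fIter_eq_applyWord, hcont, List.ofFn_fin_append, List.ofFn_get, applyWord_append]
    exact hescU _
  calc μ (orbitAvoids f x U (n + N)) ≤ (1 - δ) * μ (wordPrefix n ⁻¹' T) :=
        hμ.measure_le_of_forall_not_continue T v hδ hescape
    _ ≤ (1 - δ) * μ (orbitAvoids f x U n) := by
        gcongr
        simpa [T] using wordPrefix_preimage_image_orbitAvoids f x U n

end Avoidance

theorem stmt6_general {X : Type*} [MetricSpace X] [CompactSpace X] {k : ℕ}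
    (f : Fin k → X → X) (hf : ∀ i, Continuous (f i))
    (hmin : ∀ x : X, Dense {y | ∃ w : List (Fin k), w ≠ [] ∧ y = applyWord f w x})
    (μ : Measure (ℕ → Fin k))
    (pw : Fin k → ℝ≥0∞) (hpos : ∀ i, 0 < pw i)
    (hcyl : ∀ (n : ℕ) (w : Fin n → Fin k),
      μ {ω | ∀ i : Fin n, ω i = w i} = ∏ i, pw (w i)) :
    ∀ (x : X) (U : Set X), IsOpen U → U.Nonempty →
      ∀ᵐ ω ∂μ, ∃ n : ℕ, 1 ≤ n ∧ fIter f ω x n ∈ U := by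
  intro x U hU hUne
  have hμ : IsBernoulli μ pw := fun n w => by
    rw [wordPrefix_preimage_singleton]
    exact hcyl n w
  have := hμ.isProbabilityMeasure
  obtain ⟨F, hF⟩ := exists_finset_words_forall_applyWord_mem f hf hU fun z => by
    obtain ⟨_, ⟨u, hu, rfl⟩, hzU⟩ := (hmin z).exists_mem_open hU hUne
    exact ⟨u, hu, hzU⟩
  have hδ : (F.inf fun u => ∏ j, pw (u.1.get j)) ≠ 0 := by
    refine (Finset.lt_inf_iff ENNReal.zero_lt_top).2 (fun u _ => ?_) |>.ne'
    exact pos_iff_ne_zero.2 (Finset.prod_ne_zero_iff.2 fun j _ => (hpos _).ne')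
  have hnull := measure_iInter_eq_zero_of_le_mul
    (ENNReal.sub_lt_self ENNReal.one_ne_top one_ne_zero hδ)
    (hμ.measure_orbitAvoids_add_le f x U F hF)
  refine ae_iff.2 (measure_mono_null (fun ω hω => ?_) hnull)
  simp only [Set.mem_iInter, orbitAvoids, Finset.mem_Icc]
  exact fun n m hm hmU => hω ⟨m, hm.1, hmU⟩

theorem stmt6 {X : Type*} [MetricSpace X] [CompactSpace X] {k : ℕ}
    (f : Fin k → X → X) (hf : ∀ i, Continuous (f i))
    (hmin : ∀ x : X, Dense {y | ∃ w : List (Fin k), w ≠ [] ∧ y = applyWord f w x})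
    (μ : Measure (ℕ → Fin k)) [IsProbabilityMeasure μ]
    (pw : Fin k → ℝ≥0∞) (hpos : ∀ i, 0 < pw i) (hsum : ∑ i, pw i = 1)
    (hcyl : ∀ (n : ℕ) (w : Fin n → Fin k),
      μ {ω | ∀ i : Fin n, ω i = w i} = ∏ i, pw (w i)) :
    ∀ (x : X) (U : Set X), IsOpen U → U.Nonempty →
      ∀ᵐ ω ∂μ, ∃ n : ℕ, 1 ≤ n ∧ fIter f ω x n ∈ U :=
  stmt6_general f hf hmin μ pw hpos hcyl
end

section
/- Let f₁,…,f_k be homeomorphisms of a compact metric space X such that the IFS generated by the inverses f₁⁻¹,…,f_k⁻¹ is minimal (backward minimality), and let q ∈ X be a non-isolated point, where X has at least 3 points and no isolated points near q. Then there exists h in the semigroup generated by f₁⁻¹,…,f_k⁻¹ such that q, h(q), h²(q) are three distinct points. -/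
/-- Apply the inverses of the IFS generators along a finite word. -/
def applyInvWord {X : Type*} [TopologicalSpace X] {k : ℕ} (f : Fin k → X ≃ₜ X)
    (w : List (Fin k)) (x : X) : X :=
  w.foldl (fun y i => (f i).symm y) x

section aux
variable {X : Type*} [TopologicalSpace X] {k : ℕ} (f : Fin k → X ≃ₜ X)

lemma applyInvWord_cons (i : Fin k) (w : List (Fin k)) (x : X) :
    applyInvWord f (i :: w) x = applyInvWord f w ((f i).symm x) := rfl

lemma applyInvWord_append (u v : List (Fin k)) (x : X) :
    applyInvWord f (u ++ v) x = applyInvWord f v (applyInvWord f u x) := by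
  simp [applyInvWord, List.foldl_append]

lemma applyInvWord_continuous (w : List (Fin k)) : Continuous (applyInvWord f w) := by
  induction w with
  | nil => exact continuous_id
  | cons i w ih =>
      show Continuous fun x => applyInvWord f w ((f i).symm x)
      exact ih.comp (f i).symm.continuous

lemma applyInvWord_injective (w : List (Fin k)) : Function.Injective (applyInvWord f w) := by
  induction w with
  | nil => exact fun a b h => h
  | cons i w ih =>
      intro a b h
      exact (f i).symm.injective (ih h)

end aux

theorem stmt11 {X : Type*} [MetricSpace X] [CompactSpace X] {k : ℕ}
    (f : Fin k → X ≃ₜ X)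
    (h3 : ∃ a b c : X, a ≠ b ∧ a ≠ c ∧ b ≠ c)
    (q : X) (hq : q ∈ closure ({q}ᶜ))
    (hbmin : ∀ x : X, Dense {y | ∃ w : List (Fin k), w ≠ [] ∧ y = applyInvWord f w x}) :
    ∃ w : List (Fin k), w ≠ [] ∧
      q ≠ applyInvWord f w q ∧
      q ≠ applyInvWord f w (applyInvWord f w q) ∧
      applyInvWord f w q ≠ applyInvWord f w (applyInvWord f w q) := by
  by_contra hcon
  push_neg at hcon
  set F : List (Fin k) → X → X := applyInvWord f with hF
  have Fcons : ∀ (i : Fin k) (w : List (Fin k)) (x : X),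
      F (i :: w) x = F w ((f i).symm x) := fun i w x => rfl
  have Fapp : ∀ (u v : List (Fin k)) (x : X),
      F (u ++ v) x = F v (F u x) := fun u v x => applyInvWord_append f u v x
  have Finj : ∀ w : List (Fin k), Function.Injective (F w) :=
    fun w => applyInvWord_injective f w
  -- every nonempty word map squares to q at q
  have sq : ∀ w : List (Fin k), w ≠ [] → F w (F w q) = q := by
    intro w hw
    rcases Classical.em (q = F w q) with h1 | h1
    · rw [← h1, ← h1]
    · rcases Classical.em (q = F w (F w q)) with h2 | h2
      · exact h2.symm
      · have h3' := hcon w hw h1 h2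
        exact absurd (Finj w h3') (fun hh => h1 hh)
  -- conjugation relation
  have conj : ∀ w u : List (Fin k), w ≠ [] → u ≠ [] → F w (F u (F w q)) = F u q := by
    intro w u hw hu
    have h1 := sq (w ++ u) (by simp [hw])
    rw [Fapp, Fapp] at h1
    have h2 := sq u hu
    exact Finj u (h1.trans h2.symm)
  -- involution on orbit points
  have invol_orbit : ∀ w u : List (Fin k), w ≠ [] → u ≠ [] →
      F w (F w (F u q)) = F u q := by
    intro w u hw hu
    have h1 := conj (w ++ w) u (by simp [hw]) hu
    rw [Fapp, Fapp, sq w hw] at h1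
    exact h1
  -- involution everywhere, by density and continuity
  have invol : ∀ w : List (Fin k), w ≠ [] → ∀ x : X, F w (F w x) = x := by
    intro w hw
    have hdense := hbmin q
    have hcont : Continuous fun x => F w (F w x) :=
      (applyInvWord_continuous f w).comp (applyInvWord_continuous f w)
    have heq : (fun x => F w (F w x)) = id := by
      apply Continuous.ext_on hdense hcont continuous_id
      rintro y ⟨u, hu, rfl⟩
      exact invol_orbit w u hw hu
    intro x
    exact congrFun heq x
  -- generators commute
  have ginv : ∀ (i : Fin k) (x : X), (f i).symm ((f i).symm x) = x := by
    intro i x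
    exact invol [i] (by simp) x
  have gcomm : ∀ (i j : Fin k) (x : X),
      (f i).symm ((f j).symm x) = (f j).symm ((f i).symm x) := by
    intro i j x
    have E : (f i).symm ((f j).symm ((f i).symm x)) = (f j).symm x := by
      have h1 := invol [j, i] (by simp) ((f j).symm x)
      simp only [Fcons] at h1
      show (f i).symm ((f j).symm ((f i).symm x)) = (f j).symm x
      calc (f i).symm ((f j).symm ((f i).symm x))
          = (f i).symm ((f j).symm ((f i).symm ((f j).symm ((f j).symm x)))) := by
            rw [ginv j x]
        _ = (f j).symm x := h1
    calc (f i).symm ((f j).symm x)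
        = (f i).symm ((f i).symm ((f j).symm ((f i).symm x))) := by rw [E]
      _ = (f j).symm ((f i).symm x) := ginv i _
  -- a generator commutes with any word map
  have comm_list : ∀ (l : List (Fin k)) (i : Fin k) (x : X),
      (f i).symm (F l x) = F l ((f i).symm x) := by
    intro l
    induction l with
    | nil => intro i x; rfl
    | cons j l ih =>
        intro i x
        rw [Fcons, Fcons, ih, gcomm]
  -- normal form: every word map equals a nodup word map
  have normal : ∀ w : List (Fin k), ∃ l : List (Fin k), l.Nodup ∧ ∀ x, F w x = F l x := by
    intro w
    induction w with
    | nil => exact ⟨[], List.nodup_nil, fun x => rfl⟩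
    | cons i w ih =>
        obtain ⟨l, hl, hle⟩ := ih
        rcases Classical.em (i ∈ l) with hi | hi
        · obtain ⟨s, t, rfl⟩ := List.append_of_mem hi
          refine ⟨s ++ t, ?_, ?_⟩
          · have hsub : (s ++ t).Sublist (s ++ i :: t) :=
              (List.sublist_cons_self i t).append_left s
            exact hl.sublist hsub
          · intro x
            rw [Fcons, hle, ← comm_list]
            rw [Fapp, Fcons, Fapp]
            rw [comm_list, ginv]
        · refine ⟨i :: l, List.nodup_cons.2 ⟨hi, hl⟩, ?_⟩
          intro x
          rw [Fcons, Fcons, hle]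
  -- hence the orbit of q is finite
  have horb : {y | ∃ w : List (Fin k), w ≠ [] ∧ y = F w q} ⊆
      (fun l : List (Fin k) => F l q) '' {l | l.length ≤ k} := by
    rintro y ⟨w, hw, rfl⟩
    obtain ⟨l, hl, hle⟩ := normal w
    refine ⟨l, ?_, (hle q).symm⟩
    have := hl.length_le_card
    simpa using this
  have hfin : ({y | ∃ w : List (Fin k), w ≠ [] ∧ y = F w q} : Set X).Finite :=
    Set.Finite.subset (Set.Finite.image _ (List.finite_length_le (Fin k) k)) horb
  -- finite dense set forces X finite
  have huniv : (Set.univ : Set X).Finite := by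
    have hcl := hfin.isClosed.closure_eq
    have := (hbmin q).closure_eq
    rw [hF] at this
    have : (Set.univ : Set X) = {y | ∃ w : List (Fin k), w ≠ [] ∧ y = F w q} := by
      rw [← this, hcl]
    rw [this]
    exact hfin
  have hqc : ({q}ᶜ : Set X).Finite := huniv.subset (Set.subset_univ _)
  rw [hqc.isClosed.closure_eq] at hq
  exact hq rfl
end
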